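/- Consider a relay network with c layers and limited intermediate randomness: for each j ∈ {1,…,c} let Y_{j,1},…,Y_{j,k_j} be random variables each taking values in a fixed finite set of cardinality d, write Ȳ_j = (Y_{j,1},…,Y_{j,k_j}); for j = 2,…,c let K_j be a random variable taking values in a set of cardinality at most d^{γ_j}, and assume H(Ȳ_j | Ȳ_{j−1}, K_j) = 0 for j = 2,…,c and H(M | Ȳ_j) = 0 for every j ∈ {1,…,c}, where M is a finitely-valued random variable. Define real numbers h^1 := k_1 and h^j := min( k_j , ((k_{j−1} − r_{j−1})/k_{j−1}) · h^{j−1} + γ_j ) for j = 2,…,c. Then max over all tuples (s_1,…,s_c) with s_j ⊆ {1,…,k_j} and |s_j| = r_j of I(M ; (Y_{j,i})_{j∈{1,…,c}, i∈s_j}) ≥ H(M) − (log d) · min_{1 ≤ j ≤ c} ((k_j − r_j)/k_j) · h^j. -/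

import Mathlib

/-!
Write `W_j` for what the eavesdropper sees on layers `1, …, j`. Layer by layer one chooses the
eavesdropped edges so that `H(Ȳ_j | W_j) ≤ log d · ((k_j - r_j) / k_j) · h^j`.

For the step, `H(Ȳ_{j+1} | W_j)` is at most `H(Ȳ_{j+1}) ≤ k_{j+1} log d`, and at most
`H(Ȳ_j, K_{j+1} | W_j) ≤ H(Ȳ_j | W_j) + γ_{j+1} log d` since `Ȳ_{j+1}` is a function of
`(Ȳ_j, K_{j+1})`; hence it is at most `log d · h^{j+1}`. Expanding it by the chain rule over the
`k_{j+1}` edges of the layer, the `r_{j+1}` edges with the largest terms carry at least the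
fraction `r_{j+1} / k_{j+1}` of it, so eavesdropping on them leaves at most the fraction
`(k_{j+1} - r_{j+1}) / k_{j+1}`.

Finally, `M` is a function of every `Ȳ_j`, so `H(M | W_c) ≤ H(Ȳ_j | W_c) ≤ H(Ȳ_j | W_j)`.
-/

open Finset

/-- Probability that the finitely-valued random variable `X` takes value `x`,
with respect to the probability mass function `p` on the finite sample space `Ω`. -/
noncomputable def pmfProb {Ω : Type*} [Fintype Ω] {α : Type*} [Fintype α] [DecidableEq α]
    (p : Ω → ℝ) (X : Ω → α) (x : α) : ℝ :=
  ∑ ω, if X ω = x then p ω else 0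

/-- Shannon entropy (natural logarithm) of the random variable `X`. -/
noncomputable def entH {Ω : Type*} [Fintype Ω] {α : Type*} [Fintype α] [DecidableEq α]
    (p : Ω → ℝ) (X : Ω → α) : ℝ :=
  ∑ x, Real.negMulLog (pmfProb p X x)

/-- Conditional Shannon entropy `H(X|Y) = H(X,Y) - H(Y)`. -/
noncomputable def condH {Ω : Type*} [Fintype Ω] {α β : Type*} [Fintype α] [DecidableEq α]
    [Fintype β] [DecidableEq β] (p : Ω → ℝ) (X : Ω → α) (Y : Ω → β) : ℝ :=
  entH p (fun ω => (X ω, Y ω)) - entH p Y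

/-- Mutual information `I(X;Y) = H(X) + H(Y) - H(X,Y)`. -/
noncomputable def mutInfo {Ω : Type*} [Fintype Ω] {α β : Type*} [Fintype α] [DecidableEq α]
    [Fintype β] [DecidableEq β] (p : Ω → ℝ) (X : Ω → α) (Y : Ω → β) : ℝ :=
  entH p X + entH p Y - entH p (fun ω => (X ω, Y ω))

/-- The conditional probability mass function given an event `E`. -/
noncomputable def condPMF {Ω : Type*} [Fintype Ω] (p : Ω → ℝ) (E : Ω → Prop)
    [DecidablePred E] : Ω → ℝ :=
  fun ω => if E ω then p ω / (∑ ω' ∈ Finset.univ.filter E, p ω') else 0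


/-- The recursively defined quantities of the limited-randomness relay network:
`h^1 = k 1` and `h^j = min (k j) (((k (j-1) - r (j-1)) / k (j-1)) * h^(j-1) + γ j)`. -/
noncomputable def hseq (k r γ : ℕ → ℕ) : ℕ → ℝ
  | 0 => 0
  | 1 => (k 1 : ℝ)
  | (j + 2) => min ((k (j + 2) : ℕ) : ℝ)
      (((k (j + 1) : ℝ) - (r (j + 1) : ℝ)) / (k (j + 1) : ℝ) * hseq k r γ (j + 1)
        + (γ (j + 2) : ℝ))


open Real

lemma sum_mul_log_div_le {ι : Type*} [Fintype ι] {P Q : ι → ℝ} (hP : ∀ i, 0 ≤ P i)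
    (hQ : ∀ i, 0 ≤ Q i) (hPQ : ∀ i, 0 < P i → 0 < Q i) :
    ∑ i, P i * log (Q i / P i) ≤ ∑ i, Q i - ∑ i, P i := by
  rw [← sum_sub_distrib]
  refine sum_le_sum fun i _ => ?_
  rcases (hP i).eq_or_lt with h0 | h0
  · simpa [← h0] using hQ i
  · calc P i * log (Q i / P i) ≤ P i * (Q i / P i - 1) :=
          mul_le_mul_of_nonneg_left (log_le_sub_one_of_pos (div_pos (hPQ i h0) h0)) h0.le
      _ = Q i - P i := by field_simp

lemma negMulLog_sum_le {ι : Type*} (t : Finset ι) {w : ι → ℝ} (hw : ∀ i ∈ t, 0 ≤ w i) :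
    negMulLog (∑ i ∈ t, w i) ≤ ∑ i ∈ t, negMulLog (w i) := by
  rw [negMulLog, neg_mul, sum_mul, ← sum_neg_distrib]
  refine sum_le_sum fun i hi => ?_
  rcases (hw i hi).eq_or_lt with h0 | h0
  · simp [← h0]
  · rw [negMulLog, neg_mul, neg_le_neg_iff]
    exact mul_le_mul_of_nonneg_left (log_le_log h0 (single_le_sum hw hi)) h0.le

section Entropy

variable {Ω α β δ : Type*} [Fintype Ω] [Fintype α] [DecidableEq α] [Fintype β]
  [DecidableEq β] [Fintype δ] [DecidableEq δ] {p : Ω → ℝ}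

lemma pmfProb_nonneg (hp : ∀ ω, 0 ≤ p ω) (X : Ω → α) (x : α) : 0 ≤ pmfProb p X x :=
  sum_nonneg fun ω _ => by split_ifs <;> simp [hp ω]

lemma pmfProb_eq_sum_filter (p : Ω → ℝ) (X : Ω → α) (x : α) :
    pmfProb p X x = ∑ ω with X ω = x, p ω :=
  (sum_filter _ _).symm

lemma sum_pmfProb (p : Ω → ℝ) (X : Ω → α) : ∑ x, pmfProb p X x = ∑ ω, p ω := by
  simp_rw [pmfProb_eq_sum_filter]
  exact sum_fiberwise univ X p

lemma pmfProb_id (q : α → ℝ) (a : α) : pmfProb q id a = q a := by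
  simp [pmfProb]

lemma le_pmfProb_self (hp : ∀ ω, 0 ≤ p ω) (X : Ω → α) (ω : Ω) :
    p ω ≤ pmfProb p X (X ω) := by
  rw [pmfProb_eq_sum_filter]
  exact single_le_sum (fun ω _ => hp ω) (by simp)

lemma sum_pmfProb_pair (p : Ω → ℝ) (X : Ω → α) (Y : Ω → β) (y : β) :
    ∑ x, pmfProb p (fun ω => (X ω, Y ω)) (x, y) = pmfProb p Y y := by
  unfold pmfProb
  rw [sum_comm]
  refine sum_congr rfl fun ω _ => ?_
  simp [Prod.ext_iff, ite_and]

lemma pmfProb_comp (p : Ω → ℝ) (X : Ω → α) (g : α → β) :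
    pmfProb p (fun ω => g (X ω)) = pmfProb (pmfProb p X) g := by
  funext b
  simp_rw [pmfProb_eq_sum_filter]
  rw [← sum_fiberwise_of_maps_to (g := X) (t := univ.filter (g · = b)) (by simp)]
  refine sum_congr rfl fun x hx => sum_congr ?_ fun _ _ => rfl
  ext ω
  simp only [mem_filter, mem_univ, true_and] at hx ⊢
  constructor
  · exact fun h => h.2
  · rintro rfl; exact ⟨hx, rfl⟩

lemma entH_comp (p : Ω → ℝ) (X : Ω → α) (g : α → β) :
    entH p (fun ω => g (X ω)) = entH (pmfProb p X) g := by
  rw [entH, pmfProb_comp]; rfl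

lemma entH_eq_neg_sum_mul_log (p : Ω → ℝ) (X : Ω → α) :
    entH p X = -∑ ω, p ω * log (pmfProb p X (X ω)) := by
  rw [entH, ← sum_fiberwise univ X, ← sum_neg_distrib]
  refine sum_congr rfl fun x _ => ?_
  calc negMulLog (pmfProb p X x) = -((∑ ω with X ω = x, p ω) * log (pmfProb p X x)) := by
        rw [negMulLog, neg_mul, pmfProb_eq_sum_filter]
    _ = _ := by
        rw [sum_mul]
        exact congrArg _ (sum_congr rfl fun ω hω => by rw [(mem_filter.mp hω).2])

lemma entH_comp_le (hp : ∀ ω, 0 ≤ p ω) (X : Ω → α) (g : α → β) :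
    entH p (fun ω => g (X ω)) ≤ entH p X := by
  calc entH p (fun ω => g (X ω))
      = ∑ b, negMulLog (∑ x with g x = b, pmfProb p X x) := by
        simp_rw [entH_comp, entH, pmfProb_eq_sum_filter]
    _ ≤ ∑ b, ∑ x with g x = b, negMulLog (pmfProb p X x) :=
        sum_le_sum fun b _ => negMulLog_sum_le _ fun x _ => pmfProb_nonneg hp X x
    _ = entH p X := sum_fiberwise univ g _

lemma entH_le_log_card (hp : ∀ ω, 0 ≤ p ω) (hp1 : ∑ ω, p ω = 1) (X : Ω → α) :
    entH p X ≤ log (Fintype.card α) := by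
  have hsum : ∑ x, pmfProb p X x = 1 := by rw [sum_pmfProb, hp1]
  have hn : (0 : ℝ) < Fintype.card α := by
    have : Nonempty α := by
      by_contra h
      simp [not_nonempty_iff.mp h] at hsum
    exact_mod_cast Fintype.card_pos
  have hjensen := concaveOn_negMulLog.le_map_sum (t := univ)
    (w := fun _ => (Fintype.card α : ℝ)⁻¹) (p := pmfProb p X) (fun _ _ => by positivity)
    (by simp [hn.ne']) (fun x _ => Set.mem_Ici.mpr (pmfProb_nonneg hp X x))
  have h : (Fintype.card α : ℝ)⁻¹ * entH p X
      ≤ (Fintype.card α : ℝ)⁻¹ * log (Fintype.card α) := by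
    simpa [entH, smul_eq_mul, ← mul_sum, hsum, negMulLog, log_inv] using hjensen
  exact le_of_mul_le_mul_left h (inv_pos.mpr hn)

lemma entH_add_entH_le (q : α × β × δ → ℝ) (hq : ∀ t, 0 ≤ q t) (hq1 : ∑ t, q t = 1) :
    entH q id + entH q (fun t => t.2.2)
      ≤ entH q (fun t => (t.1, t.2.2)) + entH q (fun t => t.2) := by
  -- Gibbs' inequality against `Q(a, b, c) = q(a, c) q(b, c) / q(c)`, which has total mass 1.
  set qAC := pmfProb q (fun t => (t.1, t.2.2))
  set qBC := pmfProb q (fun t => t.2)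
  set qC := pmfProb q (fun t => t.2.2)
  set Q : α × β × δ → ℝ := fun t => qAC (t.1, t.2.2) * qBC t.2 / qC t.2.2
  have hQ : ∀ t, 0 ≤ Q t := fun t => by
    have := pmfProb_nonneg hq (fun t => (t.1, t.2.2)) (t.1, t.2.2)
    have := pmfProb_nonneg hq (fun t => t.2) t.2
    have := pmfProb_nonneg hq (fun t => t.2.2) t.2.2
    positivity
  have hpos : ∀ t, 0 < q t → 0 < qAC (t.1, t.2.2) ∧ 0 < qBC t.2 ∧ 0 < qC t.2.2 :=
    fun t ht => ⟨ht.trans_le (le_pmfProb_self hq _ t), ht.trans_le (le_pmfProb_self hq _ t),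
      ht.trans_le (le_pmfProb_self hq _ t)⟩
  have hQ1 : ∑ t, Q t = 1 := by
    have hAC c : ∑ a, qAC (a, c) = qC c := sum_pmfProb_pair q _ _ c
    have hBC c : ∑ b, qBC (b, c) = qC c := sum_pmfProb_pair q (fun t => t.2.1) _ c
    calc ∑ t, Q t = ∑ c, (∑ a, qAC (a, c)) * (∑ b, qBC (b, c)) / qC c := by
          simp only [Q, Fintype.sum_prod_type, sum_mul, mul_sum, sum_div]
          rw [sum_comm, eq_comm, sum_comm]
          exact sum_congr rfl fun _ _ => sum_comm
      _ = ∑ c, qC c := by simp_rw [hAC, hBC, mul_self_div_self]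
      _ = 1 := by rw [sum_pmfProb, hq1]
  have hgibbs := sum_mul_log_div_le hq hQ fun t ht => by
    obtain ⟨h1, h2, h3⟩ := hpos t ht
    positivity
  have hlog : ∑ t, q t * log (Q t / q t) = ∑ t, (q t * log (qAC (t.1, t.2.2))
      + q t * log (qBC t.2) - q t * log (qC t.2.2) - q t * log (q t)) := by
    refine sum_congr rfl fun t _ => ?_
    rcases (hq t).eq_or_lt with h0 | h0
    · simp [← h0]
    · obtain ⟨h1, h2, h3⟩ := hpos t h0
      simp only [Q]
      rw [log_div (by positivity) h0.ne', log_div (by positivity) h3.ne',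
        log_mul h1.ne' h2.ne']
      ring
  simp only [sum_add_distrib, sum_sub_distrib] at hlog
  simp only [entH_eq_neg_sum_mul_log q, id, pmfProb_id] at *
  linarith

end Entropy

section ConditionalEntropy

variable {Ω α β δ : Type*} [Fintype Ω] [Fintype α] [DecidableEq α] [Fintype β]
  [DecidableEq β] [Fintype δ] [DecidableEq δ] {p : Ω → ℝ}

lemma entH_eq_of_comp (hp : ∀ ω, 0 ≤ p ω) (X : Ω → α) (X' : Ω → β) (g : α → β)
    (h : β → α) (hg : ∀ ω, X' ω = g (X ω)) (hh : ∀ ω, X ω = h (X' ω)) :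
    entH p X' = entH p X := by
  have h₁ := entH_comp_le hp X g
  have h₂ := entH_comp_le hp X' h
  simp only [← hg, ← hh] at h₁ h₂
  exact le_antisymm h₁ h₂

lemma condH_eq_zero_of_eq_comp (hp : ∀ ω, 0 ≤ p ω) {X : Ω → α} (Y : Ω → β) (g : β → α)
    (hg : ∀ ω, X ω = g (Y ω)) : condH p X Y = 0 := by
  rw [condH, entH_eq_of_comp hp Y _ (fun y => (g y, y)) Prod.snd (fun ω => by rw [hg])
    fun _ => rfl, sub_self]

lemma condH_comp_left_le (hp : ∀ ω, 0 ≤ p ω) (X : Ω → α) (Y : Ω → β) (g : α → δ) :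
    condH p (fun ω => g (X ω)) Y ≤ condH p X Y :=
  sub_le_sub_right (entH_comp_le hp (fun ω => (X ω, Y ω)) fun t => (g t.1, t.2)) _

lemma condH_eq_of_comp_left (hp : ∀ ω, 0 ≤ p ω) {X : Ω → α} {X' : Ω → δ} (Y : Ω → β)
    (g : α → δ) (h : δ → α) (hg : ∀ ω, X' ω = g (X ω)) (hh : ∀ ω, X ω = h (X' ω)) :
    condH p X' Y = condH p X Y := by
  unfold condH
  rw [entH_eq_of_comp hp (fun ω => (X ω, Y ω)) (fun ω => (X' ω, Y ω)) (fun t => (g t.1, t.2))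
    (fun t => (h t.1, t.2)) (fun ω => Prod.ext (hg ω) rfl) (fun ω => Prod.ext (hh ω) rfl)]

lemma condH_pair_left (hp : ∀ ω, 0 ≤ p ω) (A : Ω → α) (B : Ω → β) (W : Ω → δ) :
    condH p (fun ω => (A ω, B ω)) W = condH p A (fun ω => (B ω, W ω)) + condH p B W := by
  unfold condH
  rw [entH_eq_of_comp hp (fun ω => (A ω, B ω, W ω)) _ (fun t => ((t.1, t.2.1), t.2.2))
    (fun t => (t.1.1, t.1.2, t.2)) (fun _ => rfl) (fun _ => rfl)]
  ring

lemma condH_pair_right_le (hp : ∀ ω, 0 ≤ p ω) (hp1 : ∑ ω, p ω = 1) (X : Ω → α)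
    (Y : Ω → β) (Z : Ω → δ) : condH p X (fun ω => (Y ω, Z ω)) ≤ condH p X Z := by
  have : entH p (fun ω => (X ω, Y ω, Z ω)) + entH p Z
      ≤ entH p (fun ω => (X ω, Z ω)) + entH p (fun ω => (Y ω, Z ω)) := by
    have := entH_add_entH_le (pmfProb p fun ω => (X ω, Y ω, Z ω)) (pmfProb_nonneg hp _)
      (by rw [sum_pmfProb, hp1])
    simp only [← entH_comp] at this
    exact this
  unfold condH
  linarith

lemma condH_le_of_eq_comp (hp : ∀ ω, 0 ≤ p ω) (hp1 : ∑ ω, p ω = 1) (X : Ω → α)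
    {Y : Ω → β} {Y' : Ω → δ} (g : β → δ) (hg : ∀ ω, Y' ω = g (Y ω)) :
    condH p X Y ≤ condH p X Y' := by
  have hY : condH p X Y = condH p X (fun ω => (Y ω, Y' ω)) := by
    unfold condH
    rw [entH_eq_of_comp hp (fun ω => (X ω, Y ω)) (fun ω => (X ω, Y ω, Y' ω))
        (fun t => (t.1, t.2, g t.2)) (fun t => (t.1, t.2.1))
        (fun ω => Prod.ext rfl (Prod.ext rfl (hg ω))) (fun _ => rfl),
      entH_eq_of_comp hp Y (fun ω => (Y ω, Y' ω)) (fun y => (y, g y)) Prod.fst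
        (fun ω => Prod.ext rfl (hg ω)) (fun _ => rfl)]
  rw [hY]
  exact condH_pair_right_le hp hp1 X Y Y'

lemma condH_le_entH (hp : ∀ ω, 0 ≤ p ω) (hp1 : ∑ ω, p ω = 1) (X : Ω → α) (Y : Ω → β) :
    condH p X Y ≤ entH p X := by
  have hconst : condH p X (fun _ => ()) = entH p X := by
    have : entH p (fun _ : Ω => ()) = 0 := by simp [entH, pmfProb, hp1]
    rw [condH, this, sub_zero]
    exact entH_eq_of_comp hp X _ (fun x => (x, ())) Prod.fst (fun _ => rfl) (fun _ => rfl)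
  calc condH p X Y ≤ condH p X (fun _ => ()) :=
        condH_le_of_eq_comp hp hp1 X (fun _ => ()) fun _ => rfl
    _ = entH p X := hconst

lemma condH_le_condH_of_condH_eq_zero (hp : ∀ ω, 0 ≤ p ω) (hp1 : ∑ ω, p ω = 1)
    {Z : Ω → α} {Y : Ω → β} (hZ : condH p Z Y = 0) (W : Ω → δ) :
    condH p Z W ≤ condH p Y W := by
  calc condH p Z W ≤ condH p (fun ω => (Z ω, Y ω)) W :=
        condH_comp_left_le hp (fun ω => (Z ω, Y ω)) W Prod.fst
    _ = condH p Z (fun ω => (Y ω, W ω)) + condH p Y W := condH_pair_left hp Z Y W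
    _ ≤ condH p Z Y + condH p Y W := by
        gcongr; exact condH_le_of_eq_comp hp hp1 Z Prod.fst fun _ => rfl
    _ = condH p Y W := by rw [hZ, zero_add]

lemma condH_pair_le_add_entH (hp : ∀ ω, 0 ≤ p ω) (hp1 : ∑ ω, p ω = 1) (X : Ω → α)
    (K : Ω → β) (W : Ω → δ) :
    condH p (fun ω => (X ω, K ω)) W ≤ condH p X W + entH p K := by
  rw [condH_pair_left hp]
  gcongr
  · exact condH_pair_right_le hp hp1 X K W
  · exact condH_le_entH hp hp1 K W

lemma mutInfo_eq_entH_sub_condH (p : Ω → ℝ) (X : Ω → α) (Y : Ω → β) :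
    mutInfo p X Y = entH p X - condH p X Y := by
  unfold mutInfo condH
  ring

end ConditionalEntropy

section Selection

variable {ι : Type*} [Fintype ι] [DecidableEq ι]

lemma exists_card_eq_forall_le (a : ι → ℝ) {r : ℕ} (hr : r ≤ Fintype.card ι) :
    ∃ s : Finset ι, #s = r ∧ ∀ i ∈ s, ∀ j ∉ s, a j ≤ a i := by
  obtain ⟨s, hs, hmax⟩ := exists_max_image (univ.powersetCard r) (fun t => ∑ i ∈ t, a i)
    (powersetCard_nonempty.mpr (by simpa using hr))
  rw [mem_powersetCard_univ] at hs
  refine ⟨s, hs, fun i hi j hj => not_lt.mp fun hlt => ?_⟩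
  have hj' : j ∉ s.erase i := fun h => hj (mem_of_mem_erase h)
  have hcard : #(insert j (s.erase i)) = r := by
    rw [card_insert_of_notMem hj', card_erase_of_mem hi, hs]
    exact Nat.sub_add_cancel (hs ▸ card_pos.mpr ⟨i, hi⟩)
  have := hmax _ (mem_powersetCard_univ.mpr hcard)
  rw [sum_insert hj', ← add_sum_erase s a hi] at this
  linarith

lemma exists_card_eq_mul_sum_le (a : ι → ℝ) {r : ℕ} (hr : r ≤ Fintype.card ι) :
    ∃ s : Finset ι, #s = r ∧ r * ∑ i, a i ≤ Fintype.card ι * ∑ i ∈ s, a i := by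
  obtain ⟨s, hs, hle⟩ := exists_card_eq_forall_le a hr
  refine ⟨s, hs, ?_⟩
  calc (r : ℝ) * ∑ i, a i = r * ∑ i ∈ s, a i + ∑ _i ∈ s, ∑ j ∈ sᶜ, a j := by
        rw [← sum_add_sum_compl s a, mul_add, sum_const, hs, nsmul_eq_mul]
    _ ≤ r * ∑ i ∈ s, a i + ∑ i ∈ s, ∑ _j ∈ sᶜ, a i := by
        gcongr with i hi j hj
        exact hle i hi j (mem_compl.mp hj)
    _ = Fintype.card ι * ∑ i ∈ s, a i := by
        simp only [sum_const, card_compl, hs, nsmul_eq_mul, ← mul_sum]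
        rw [Nat.cast_sub hr]
        ring

end Selection

/-- Hiding coordinates by `none`, rather than restricting to the subtype `s`, keeps the type
independent of `s`, which the chain rule over `s` needs. -/
def maskTuple {Ω α ι : Type*} [DecidableEq ι] (Z : ι → Ω → α) (s : Finset ι) :
    Ω → ι → Option α :=
  fun ω i => if i ∈ s then some (Z i ω) else none

section Mask

variable {Ω α β ι : Type*} [Fintype Ω] [Fintype α] [DecidableEq α] [Fintype β]
  [DecidableEq β] [Fintype ι] [LinearOrder ι] {p : Ω → ℝ}

lemma condH_maskTuple_insert [Nonempty α] (hp : ∀ ω, 0 ≤ p ω) (Z : ι → Ω → α) (W : Ω → β)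
    {a : ι} {s : Finset ι} (ha : a ∉ s) :
    condH p (maskTuple Z (insert a s)) W
      = condH p (Z a) (fun ω => (maskTuple Z s ω, W ω)) + condH p (maskTuple Z s) W := by
  rw [← condH_pair_left hp]
  refine condH_eq_of_comp_left hp W (fun t i => if i = a then some t.1 else t.2 i)
    (fun m => ((m a).getD (Classical.arbitrary α), fun i => if i = a then none else m i))
    (fun ω => funext fun i => ?_) (fun ω => Prod.ext (by simp [maskTuple]) (funext fun i => ?_))
  · by_cases hi : i = a <;> simp [maskTuple, hi]
  · by_cases hi : i = a <;> simp [maskTuple, hi, ha]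

lemma condH_maskTuple [Nonempty α] (hp : ∀ ω, 0 ≤ p ω) (Z : ι → Ω → α) (W : Ω → β)
    (s : Finset ι) :
    condH p (maskTuple Z s) W
      = ∑ i ∈ s, condH p (Z i) (fun ω => (maskTuple Z {j ∈ s | j < i} ω, W ω)) := by
  induction s using Finset.induction_on_max with
  | empty =>
    rw [sum_empty]
    exact condH_eq_zero_of_eq_comp hp W (fun _ _ => none) fun ω => funext fun i => by
      simp [maskTuple]
  | insert a s ha ih =>
    have has : a ∉ s := fun h => lt_irrefl a (ha a h)
    rw [condH_maskTuple_insert hp Z W has, sum_insert has, ih, filter_insert,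
      if_neg (lt_irrefl a), filter_true_of_mem ha]
    congr 1
    refine sum_congr rfl fun i hi => ?_
    rw [filter_insert, if_neg (not_lt.mpr (ha i hi).le)]

theorem exists_card_eq_condH_maskTuple_le (hp : ∀ ω, 0 ≤ p ω) (hp1 : ∑ ω, p ω = 1)
    (Z : ι → Ω → α) (W : Ω → β) {r : ℕ} (hr : r ≤ Fintype.card ι) :
    ∃ s : Finset ι, #s = r ∧
      condH p (fun ω i => Z i ω) (fun ω => (maskTuple Z s ω, W ω))
        ≤ ((Fintype.card ι - r) / Fintype.card ι) * condH p (fun ω i => Z i ω) W := by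
  set a : ι → ℝ := fun i => condH p (Z i) (fun ω => (maskTuple Z {j | j < i} ω, W ω))
  obtain ⟨s, hs, hsum⟩ := exists_card_eq_mul_sum_le a hr
  refine ⟨s, hs, ?_⟩
  rcases (Fintype.card ι).eq_zero_or_pos with hι | hι
  · have : IsEmpty ι := Fintype.card_eq_zero_iff.mp hι
    rw [condH_eq_zero_of_eq_comp hp (fun ω => (maskTuple Z s ω, W ω)) (fun _ i => isEmptyElim i)
      fun _ => funext fun i => isEmptyElim i]
    simp
  have : Nonempty α := by
    obtain ⟨ω, -⟩ := nonempty_of_sum_ne_zero (hp1 ▸ one_ne_zero : ∑ ω, p ω ≠ 0)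
    have : Nonempty ι := Fintype.card_pos_iff.mp hι
    exact ⟨Z (Classical.arbitrary ι) ω⟩
  have htotal : condH p (fun ω i => Z i ω) W = ∑ i, a i := by
    rw [← condH_maskTuple hp Z W univ]
    exact (condH_eq_of_comp_left hp W (fun v i => some (v i))
      (fun m i => (m i).getD (Classical.arbitrary α))
      (fun ω => funext fun i => by simp [maskTuple])
      (fun ω => funext fun i => by simp [maskTuple])).symm
  have hreveal : ∑ i ∈ s, a i ≤ condH p (maskTuple Z s) W := by
    rw [condH_maskTuple hp Z W s]
    gcongr with i hi
    refine condH_le_of_eq_comp hp hp1 (Z i)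
      (fun t => (fun j => if j ∈ s then t.1 j else none, t.2))
      fun ω => Prod.ext (funext fun j => ?_) rfl
    by_cases hj : j ∈ s <;> simp [maskTuple, hj]
  have hsplit : condH p (fun ω i => Z i ω) (fun ω => (maskTuple Z s ω, W ω))
      + condH p (maskTuple Z s) W ≤ condH p (fun ω i => Z i ω) W := by
    rw [← condH_pair_left hp]
    exact condH_comp_left_le hp (fun ω i => Z i ω) W
      (fun v => (v, fun j => if j ∈ s then some (v j) else none))
  have hn : (0 : ℝ) < Fintype.card ι := by exact_mod_cast hι
  rw [div_mul_eq_mul_div, le_div_iff₀ hn]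
  calc _ ≤ (condH p (fun ω i => Z i ω) W - ∑ i ∈ s, a i) * Fintype.card ι := by
        gcongr; linarith
    _ ≤ _ := by rw [htotal]; linear_combination hsum

end Mask

section Eavesdropping

variable {Ω α : Type*} {k : ℕ → ℕ}

def layer (Y : (j : ℕ) → Fin (k j) → Ω → α) (j : ℕ) : Ω → Fin (k j) → α :=
  fun ω i => Y j i ω

def eavesdropped (Y : (j : ℕ) → Fin (k j) → Ω → α) (s : (j : ℕ) → Finset (Fin (k j)))
    (j : ℕ) : Ω → (l : Icc 1 j) → Fin (k l) → Option α :=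
  fun ω l => maskTuple (Y l) (s l) ω

lemma eavesdropped_update_of_lt (Y : (j : ℕ) → Fin (k j) → Ω → α)
    (s : (j : ℕ) → Finset (Fin (k j))) {j m : ℕ} (t : Finset (Fin (k m))) (hj : j < m) :
    eavesdropped Y (Function.update s m t) j = eavesdropped Y s j := by
  funext ω l
  have : l.1 ≠ m := by have := (mem_Icc.mp l.2).2; omega
  simp only [eavesdropped, Function.update_of_ne this]

end Eavesdropping

section RelayNetwork

variable {Ω α β : Type*} [Fintype Ω] [Fintype α] [DecidableEq α] [Fintype β] [DecidableEq β]
  {p : Ω → ℝ} {k : ℕ → ℕ} (Y : (j : ℕ) → Fin (k j) → Ω → α)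

lemma entH_le_mul_log (hp : ∀ ω, 0 ≤ p ω) (hp1 : ∑ ω, p ω = 1) (X : Ω → β) {d m : ℕ}
    (hβ : Fintype.card β ≤ d ^ m) : entH p X ≤ m * log d := by
  obtain ⟨ω, -⟩ := nonempty_of_sum_ne_zero (hp1 ▸ one_ne_zero : ∑ ω, p ω ≠ 0)
  have : Nonempty β := ⟨X ω⟩
  calc entH p X ≤ log (Fintype.card β) := entH_le_log_card hp hp1 X
    _ ≤ log ((d ^ m : ℕ) : ℝ) :=
        log_le_log (by exact_mod_cast Fintype.card_pos) (by exact_mod_cast hβ)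
    _ = m * log d := by push_cast; rw [log_pow]

lemma entH_layer_le (hp : ∀ ω, 0 ≤ p ω) (hp1 : ∑ ω, p ω = 1) {d : ℕ}
    (hα : Fintype.card α = d) (j : ℕ) : entH p (layer Y j) ≤ k j * log d :=
  entH_le_mul_log hp hp1 _ (by simp [hα])

lemma condH_layer_succ_le_hseq (hp : ∀ ω, 0 ≤ p ω) (hp1 : ∑ ω, p ω = 1) {d : ℕ}
    (hα : Fintype.card α = d) {r γ : ℕ → ℕ} {j : ℕ} {κ : Type*} [Fintype κ] [DecidableEq κ]
    {K : Ω → κ} (hκ : Fintype.card κ ≤ d ^ γ (j + 2))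
    (hdet : condH p (layer Y (j + 2)) (fun ω => (layer Y (j + 1) ω, K ω)) = 0) (W : Ω → β)
    (hW : condH p (layer Y (j + 1)) W
      ≤ log d * ((k (j + 1) - r (j + 1)) / k (j + 1) * hseq k r γ (j + 1))) :
    condH p (layer Y (j + 2)) W ≤ log d * hseq k r γ (j + 2) := by
  rw [hseq, mul_min_of_nonneg _ _ (log_natCast_nonneg d)]
  refine le_min ?_ ?_
  · calc condH p (layer Y (j + 2)) W ≤ k (j + 2) * log d :=
          (condH_le_entH hp hp1 _ W).trans (entH_layer_le Y hp hp1 hα _)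
      _ = _ := mul_comm _ _
  · calc condH p (layer Y (j + 2)) W ≤ condH p (fun ω => (layer Y (j + 1) ω, K ω)) W :=
          condH_le_condH_of_condH_eq_zero hp hp1 hdet W
      _ ≤ condH p (layer Y (j + 1)) W + entH p K := condH_pair_le_add_entH hp hp1 _ K W
      _ ≤ log d * ((k (j + 1) - r (j + 1)) / k (j + 1) * hseq k r γ (j + 1))
          + γ (j + 2) * log d := add_le_add hW (entH_le_mul_log hp hp1 K hκ)
      _ = _ := by ring

lemma condH_eavesdropped_le_of_le (hp : ∀ ω, 0 ≤ p ω) (hp1 : ∑ ω, p ω = 1) (X : Ω → β)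
    (s : (j : ℕ) → Finset (Fin (k j))) {j m : ℕ} (hjm : j ≤ m) :
    condH p X (eavesdropped Y s m) ≤ condH p X (eavesdropped Y s j) :=
  condH_le_of_eq_comp hp hp1 X (fun w l => w ⟨l, Icc_subset_Icc_right hjm l.2⟩) fun _ => rfl

lemma condH_eavesdropped_succ_le (hp : ∀ ω, 0 ≤ p ω) (hp1 : ∑ ω, p ω = 1) (X : Ω → β)
    (s : (j : ℕ) → Finset (Fin (k j))) (j : ℕ) :
    condH p X (eavesdropped Y s (j + 1))
      ≤ condH p X (fun ω => (maskTuple (Y (j + 1)) (s (j + 1)) ω, eavesdropped Y s j ω)) :=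
  condH_le_of_eq_comp hp hp1 X
    (fun w => (w ⟨j + 1, by simp⟩, fun l => w ⟨l, Icc_subset_Icc_right j.le_succ l.2⟩))
    fun _ => rfl

theorem exists_eavesdrop_condH_layer_le (hp : ∀ ω, 0 ≤ p ω) (hp1 : ∑ ω, p ω = 1) {c d : ℕ}
    (hα : Fintype.card α = d) {r γ : ℕ → ℕ} (hr : ∀ j ∈ Icc 1 c, r j ≤ k j)
    {κ : ℕ → Type*} [∀ j, Fintype (κ j)] [∀ j, DecidableEq (κ j)] {K : (j : ℕ) → Ω → κ j}
    (hκ : ∀ j, 2 ≤ j → j ≤ c → Fintype.card (κ j) ≤ d ^ γ j)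
    (hdet : ∀ j, 2 ≤ j → j ≤ c →
      condH p (layer Y j) (fun ω => (layer Y (j - 1) ω, K j ω)) = 0) :
    ∀ j ≤ c, ∃ s : (l : ℕ) → Finset (Fin (k l)), ∀ l ∈ Icc 1 j, #(s l) = r l ∧
      condH p (layer Y l) (eavesdropped Y s l) ≤ log d * ((k l - r l) / k l * hseq k r γ l) := by
  intro j
  induction j with
  | zero => exact fun _ => ⟨fun _ => ∅, by simp⟩
  | succ j ih =>
    intro hj
    obtain ⟨s, hs⟩ := ih (by omega)
    have hmem : j + 1 ∈ Icc 1 c := mem_Icc.mpr ⟨by omega, hj⟩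
    have hnext : condH p (layer Y (j + 1)) (eavesdropped Y s j)
        ≤ log d * hseq k r γ (j + 1) := by
      rcases j with _ | j
      · calc _ ≤ k 1 * log d := (condH_le_entH hp hp1 _ _).trans (entH_layer_le Y hp hp1 hα 1)
          _ = log d * hseq k r γ 1 := mul_comm _ _
      · exact condH_layer_succ_le_hseq Y hp hp1 hα (hκ _ (by omega) hj) (hdet _ (by omega) hj)
          _ (hs (j + 1) (by simp)).2
    obtain ⟨t, ht, hle⟩ := exists_card_eq_condH_maskTuple_le hp hp1 (Y (j + 1))
      (eavesdropped Y s j) (r := r (j + 1)) (by simpa using hr _ hmem)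
    rw [Fintype.card_fin] at hle
    refine ⟨Function.update s (j + 1) t, fun l hl => ?_⟩
    rcases (mem_Icc.mp hl).2.lt_or_eq with hlt | rfl
    · rw [Function.update_of_ne hlt.ne, eavesdropped_update_of_lt Y s t hlt]
      exact hs l (mem_Icc.mpr ⟨(mem_Icc.mp hl).1, by omega⟩)
    refine ⟨by rw [Function.update_self, ht], ?_⟩
    have hcoef : 0 ≤ ((k (j + 1) : ℝ) - r (j + 1)) / k (j + 1) :=
      div_nonneg (sub_nonneg.mpr (by exact_mod_cast hr _ hmem)) (Nat.cast_nonneg _)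
    have hreveal := condH_eavesdropped_succ_le Y hp hp1 (layer Y (j + 1))
      (Function.update s (j + 1) t) j
    rw [Function.update_self, eavesdropped_update_of_lt Y s t j.lt_succ_self] at hreveal
    calc _ ≤ _ := hreveal
      _ ≤ ((k (j + 1) - r (j + 1)) / k (j + 1)) * condH p (layer Y (j + 1)) (eavesdropped Y s j) :=
          hle
      _ ≤ ((k (j + 1) - r (j + 1)) / k (j + 1)) * (log d * hseq k r γ (j + 1)) :=
          mul_le_mul_of_nonneg_left hnext hcoef
      _ = _ := by ring

end RelayNetwork

theorem relay_network_limited_rand_leak_lower_bound_general {Ω α μ : Type*} [Fintype Ω]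
    [Fintype α] [DecidableEq α] [Fintype μ] [DecidableEq μ]
    {κ : ℕ → Type*} [∀ j, Fintype (κ j)] [∀ j, DecidableEq (κ j)]
    (p : Ω → ℝ) (hp : ∀ ω, 0 ≤ p ω) (hp1 : ∑ ω, p ω = 1)
    (c d : ℕ) (hc : 1 ≤ c) (hα : Fintype.card α = d)
    (k r γ : ℕ → ℕ)
    (hr : ∀ j ∈ Finset.Icc 1 c, r j ≤ k j)
    (Y : (j : ℕ) → Fin (k j) → Ω → α) (K : (j : ℕ) → Ω → κ j) (M : Ω → μ)
    (hκ : ∀ j, 2 ≤ j → j ≤ c → Fintype.card (κ j) ≤ d ^ γ j)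
    (hdet : ∀ j, 2 ≤ j → j ≤ c →
      condH p (fun ω (i : Fin (k j)) => Y j i ω)
        (fun ω => ((fun i : Fin (k (j - 1)) => Y (j - 1) i ω), K j ω)) = 0)
    (hdec : ∀ j ∈ Finset.Icc 1 c,
      condH p M (fun ω (i : Fin (k j)) => Y j i ω) = 0) :
    ∃ s : (j : ℕ) → Finset (Fin (k j)),
      (∀ j ∈ Finset.Icc 1 c, (s j).card = r j) ∧
      entH p M - Real.log d *
          (Finset.Icc 1 c).inf' (Finset.nonempty_Icc.mpr hc)
            (fun j => ((k j : ℝ) - (r j : ℝ)) / (k j : ℝ) * hseq k r γ j)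
        ≤ mutInfo p M
            (fun ω (j : ↥(Finset.Icc 1 c)) (i : ↥(s j.1)) => Y j.1 i.1 ω) := by
  obtain ⟨s, hs⟩ := exists_eavesdrop_condH_layer_le Y hp hp1 hα hr hκ hdet c le_rfl
  refine ⟨s, fun j hj => (hs j hj).1, ?_⟩
  obtain ⟨j, hj, hmin⟩ := exists_mem_eq_inf' (nonempty_Icc.mpr hc)
    fun j => ((k j : ℝ) - r j) / k j * hseq k r γ j
  rw [hmin, mutInfo_eq_entH_sub_condH, sub_le_sub_iff_left]
  calc condH p M (fun ω (j : Icc 1 c) (i : s j.1) => Y j.1 i.1 ω)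
      ≤ condH p M (eavesdropped Y s c) :=
        condH_le_of_eq_comp hp hp1 M
          (fun w l i => if h : i ∈ s l then some (w l ⟨i, h⟩) else none)
          fun ω => by funext l i; simp [eavesdropped, maskTuple]
    _ ≤ condH p (layer Y j) (eavesdropped Y s c) :=
        condH_le_condH_of_condH_eq_zero hp hp1 (hdec j hj) _
    _ ≤ condH p (layer Y j) (eavesdropped Y s j) :=
        condH_eavesdropped_le_of_le Y hp hp1 _ s (mem_Icc.mp hj).2
    _ ≤ _ := (hs j hj).2

/-- paper's Theorem 5, condition (C2'): relay network with `c` layers and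
limited intermediate randomness. Layer `j` is a deterministic function of the previous
layer together with the node randomness `K j` taking at most `d ^ γ j` values, and the
message `M` is recoverable from every layer. Then there is a tuple of eavesdropped edge
sets `s j` with `|s j| = r j` such that
`I(M ; (Y_{j,i})_{j,i∈s j}) ≥ H(M) - log d * min_j ((k j - r j)/(k j)) * h^j`. -/
theorem relay_network_limited_rand_leak_lower_bound {Ω α μ : Type*} [Fintype Ω]
    [Fintype α] [DecidableEq α] [Fintype μ] [DecidableEq μ]
    {κ : ℕ → Type*} [∀ j, Fintype (κ j)] [∀ j, DecidableEq (κ j)]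
    (p : Ω → ℝ) (hp : ∀ ω, 0 ≤ p ω) (hp1 : ∑ ω, p ω = 1)
    (c d : ℕ) (hc : 1 ≤ c) (hd : 1 ≤ d) (hα : Fintype.card α = d)
    (k r γ : ℕ → ℕ) (hk : ∀ j ∈ Finset.Icc 1 c, 1 ≤ k j)
    (hr : ∀ j ∈ Finset.Icc 1 c, r j ≤ k j)
    (Y : (j : ℕ) → Fin (k j) → Ω → α) (K : (j : ℕ) → Ω → κ j) (M : Ω → μ)
    (hκ : ∀ j, 2 ≤ j → j ≤ c → Fintype.card (κ j) ≤ d ^ γ j)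
    (hdet : ∀ j, 2 ≤ j → j ≤ c →
      condH p (fun ω (i : Fin (k j)) => Y j i ω)
        (fun ω => ((fun i : Fin (k (j - 1)) => Y (j - 1) i ω), K j ω)) = 0)
    (hdec : ∀ j ∈ Finset.Icc 1 c,
      condH p M (fun ω (i : Fin (k j)) => Y j i ω) = 0) :
    ∃ s : (j : ℕ) → Finset (Fin (k j)),
      (∀ j ∈ Finset.Icc 1 c, (s j).card = r j) ∧
      entH p M - Real.log d *
          (Finset.Icc 1 c).inf' (Finset.nonempty_Icc.mpr hc)
            (fun j => ((k j : ℝ) - (r j : ℝ)) / (k j : ℝ) * hseq k r γ j)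
        ≤ mutInfo p M
            (fun ω (j : ↥(Finset.Icc 1 c)) (i : ↥(s j.1)) => Y j.1 i.1 ω) :=
  relay_network_limited_rand_leak_lower_bound_general p hp hp1 c d hc hα k r γ hr Y K M hκ hdet hdec
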